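/- arXiv:2503.19648 — 2 statements merged into one kernel-verified Lean document; each statement's English description precedes it below -/
import Mathlib

section
/- Assume: (A1) σ : ℝ×[0,T] → ℝ is bounded, bounded away from zero and Lipschitz continuous; (A2) β : ∂_p((0,+∞)×[0,T)) → ℝ is bounded and Lipschitz continuous; (A3) H : ℝ×ℝ×ℝ×[0,T] → ℝ is Lipschitz continuous on compact subsets and there is K>0 with |H(p,u,x,t)| ≤ K(1+|u|+|p|) and |H(p,u,x,t)−H(p̄,ū,x,t)| ≤ K(|u−ū|+|p−p̄|); (A4') there exist a bounded classical solution w of D_t w + (σ²(x,t)/2)·D_x² w + 1 = 0 on (0,+∞)×[0,T) with w = 0 on the parabolic boundary, and L>0 with |w(x,t) − w(x̄,t)| ≤ L|x−x̄| for all x,x̄ ≥ 0, t ∈ [0,T]. If u₁ and u₂ are two classical solutions of D_t u + (σ²(x,t)/2)·D_x² u + H(D_x u, u, x, t) = 0 on (0,+∞)×[0,T) with u = β on the parabolic boundary, both belonging to the class C^{1+,0+}_{b,loc}, then u₁ ≡ u₂ on [0,+∞)×[0,T]. -/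
open Set

/-- Partial derivative in the space variable `x`. -/
noncomputable def Dx (u : ℝ → ℝ → ℝ) (x t : ℝ) : ℝ := deriv (fun y => u y t) x

/-- Second partial derivative in the space variable `x`. -/
noncomputable def Dxx (u : ℝ → ℝ → ℝ) (x t : ℝ) : ℝ := deriv (fun y => Dx u y t) x

/-- Partial derivative in the time variable `t`. -/
noncomputable def Dt (u : ℝ → ℝ → ℝ) (x t : ℝ) : ℝ := deriv (fun s => u x s) t

/-- The parabolic boundary ∂ₚ((0,∞)×[0,T)) = ([0,∞)×{T}) ∪ ({0}×[0,T]). -/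
def parabBdry (T : ℝ) : Set (ℝ × ℝ) := (Ici 0 ×ˢ {T}) ∪ ({0} ×ˢ Icc 0 T)

/-- `u ∈ C^{2,1}((0,∞)×[0,T)) ∩ C([0,∞)×[0,T])`: continuity on the closed domain, and
existence plus continuity of `D_x u`, `D_x² u`, `D_t u` on `(0,∞)×[0,T)`. -/
def RegC21 (T : ℝ) (u : ℝ → ℝ → ℝ) : Prop :=
  ContinuousOn (fun p : ℝ × ℝ => u p.1 p.2) (Ici 0 ×ˢ Icc 0 T) ∧
  (∀ x ∈ Ioi (0:ℝ), ∀ t ∈ Ico (0:ℝ) T,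
    DifferentiableAt ℝ (fun y => u y t) x ∧
    DifferentiableAt ℝ (fun y => Dx u y t) x ∧
    DifferentiableAt ℝ (fun s => u x s) t) ∧
  ContinuousOn (fun p : ℝ × ℝ => Dx u p.1 p.2) (Ioi 0 ×ˢ Ico 0 T) ∧
  ContinuousOn (fun p : ℝ × ℝ => Dxx u p.1 p.2) (Ioi 0 ×ˢ Ico 0 T) ∧
  ContinuousOn (fun p : ℝ × ℝ => Dt u p.1 p.2) (Ioi 0 ×ˢ Ico 0 T)

/-- (A1): `σ` is bounded, bounded away from zero and Lipschitz continuous on `ℝ×[0,T]`. -/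
def CondA1 (T : ℝ) (σ : ℝ → ℝ → ℝ) : Prop :=
  (∃ C, ∀ x : ℝ, ∀ t ∈ Icc (0:ℝ) T, |σ x t| ≤ C) ∧
  (∃ m > 0, ∀ x : ℝ, ∀ t ∈ Icc (0:ℝ) T, m ≤ |σ x t|) ∧
  (∃ L > 0, ∀ x x' : ℝ, ∀ t ∈ Icc (0:ℝ) T, ∀ t' ∈ Icc (0:ℝ) T,
    |σ x t - σ x' t'| ≤ L * (|x - x'| + |t - t'|))

/-- (A2): `β` is bounded and Lipschitz continuous on the parabolic boundary. -/
def CondA2 (T : ℝ) (β : ℝ → ℝ → ℝ) : Prop :=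
  (∃ C, ∀ p ∈ parabBdry T, |β p.1 p.2| ≤ C) ∧
  (∃ L > 0, ∀ p ∈ parabBdry T, ∀ q ∈ parabBdry T,
    |β p.1 p.2 - β q.1 q.2| ≤ L * (|p.1 - q.1| + |p.2 - q.2|))

/-- (A3): `H` is Lipschitz continuous on compact subsets of `ℝ³×[0,T]`, has linear growth
in `(p,u)` and is uniformly Lipschitz in `(p,u)`. -/
def CondA3 (T : ℝ) (H : ℝ → ℝ → ℝ → ℝ → ℝ) : Prop :=
  (∀ U : Set (ℝ × ℝ × ℝ × ℝ), IsCompact U → (∀ q ∈ U, q.2.2.2 ∈ Icc (0:ℝ) T) →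
    ∃ L > 0, ∀ q ∈ U, ∀ q' ∈ U,
      |H q.1 q.2.1 q.2.2.1 q.2.2.2 - H q'.1 q'.2.1 q'.2.2.1 q'.2.2.2| ≤
        L * (|q.1 - q'.1| + |q.2.1 - q'.2.1| + |q.2.2.1 - q'.2.2.1| + |q.2.2.2 - q'.2.2.2|)) ∧
  (∃ K > 0,
    (∀ p u x : ℝ, ∀ t ∈ Icc (0:ℝ) T, |H p u x t| ≤ K * (1 + |u| + |p|)) ∧
    (∀ p p' u u' x : ℝ, ∀ t ∈ Icc (0:ℝ) T,
      |H p u x t - H p' u' x t| ≤ K * (|u - u'| + |p - p'|)))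

/-- (A4'): there is a bounded classical solution `w` of
`D_t w + (σ²/2)·D_x² w + 1 = 0` on `(0,∞)×[0,T)` vanishing on the parabolic boundary,
which is Lipschitz continuous in `x` uniformly in `t`. -/
def CondA4' (T : ℝ) (σ : ℝ → ℝ → ℝ) : Prop :=
  ∃ w : ℝ → ℝ → ℝ,
    RegC21 T w ∧
    (∃ C, ∀ x ∈ Ici (0:ℝ), ∀ t ∈ Icc (0:ℝ) T, |w x t| ≤ C) ∧
    (∀ x ∈ Ioi (0:ℝ), ∀ t ∈ Ico (0:ℝ) T,
      Dt w x t + σ x t ^ 2 / 2 * Dxx w x t + 1 = 0) ∧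
    (∀ p ∈ parabBdry T, w p.1 p.2 = 0) ∧
    (∃ L > 0, ∀ x ∈ Ici (0:ℝ), ∀ x' ∈ Ici (0:ℝ), ∀ t ∈ Icc (0:ℝ) T,
      |w x t - w x' t| ≤ L * |x - x'|)


/-- Hölder continuity on compact subsets of a set `O ⊆ ℝ²`. -/
def HolderOnCompacts (O : Set (ℝ × ℝ)) (f : ℝ → ℝ → ℝ) : Prop :=
  ∀ U ⊆ O, IsCompact U → ∃ L > 0, ∃ l ∈ Ioc (0:ℝ) 1,
    ∀ p ∈ U, ∀ q ∈ U, |f p.1 p.2 - f q.1 q.2| ≤ L * ‖p - q‖ ^ l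

/-- Membership in `C_b^{1,0}`: `u` is bounded and continuous on `[0,∞)×[0,T)` and
`D_x u` exists, is continuous and bounded on `(0,∞)×[0,T)`. -/
def MemCb10 (T : ℝ) (u : ℝ → ℝ → ℝ) : Prop :=
  ContinuousOn (fun p : ℝ × ℝ => u p.1 p.2) (Ici 0 ×ˢ Ico 0 T) ∧
  (∃ C, ∀ x ∈ Ici (0:ℝ), ∀ t ∈ Ico (0:ℝ) T, |u x t| ≤ C) ∧
  (∀ x ∈ Ioi (0:ℝ), ∀ t ∈ Ico (0:ℝ) T, DifferentiableAt ℝ (fun y => u y t) x) ∧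
  ContinuousOn (fun p : ℝ × ℝ => Dx u p.1 p.2) (Ioi 0 ×ˢ Ico 0 T) ∧
  (∃ C, ∀ x ∈ Ioi (0:ℝ), ∀ t ∈ Ico (0:ℝ) T, |Dx u x t| ≤ C)

/-- Membership in `C^{1+,0+}_{b,loc}`: `u ∈ C_b^{1,0}` and both `u` and `D_x u` are
Hölder continuous on compact subsets of `(0,∞)×[0,T)`. -/
def MemC1plus (T : ℝ) (u : ℝ → ℝ → ℝ) : Prop :=
  MemCb10 T u ∧
  HolderOnCompacts (Ioi 0 ×ˢ Ico 0 T) u ∧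
  HolderOnCompacts (Ioi 0 ×ˢ Ico 0 T) (Dx u)

/-!
The difference `w = u₁ - u₂` of two solutions vanishes on the parabolic boundary and, by the
Lipschitz bound on `H`, satisfies `D_t w + (σ²/2) D_x² w + K (|w| + |D_x w|) ≥ 0`; it suffices to
show that such a bounded `w` is `≤ 0`. For `ε > 0` consider `Φ = w e^{2Kt} - ε (1 + x)`.
As `w` is bounded, `Φ < 0` for large `x`, so a positive maximum of `Φ` over `[0, ∞) × [0, T]`
would be attained at some `(x₀, t₀)` with `x₀ > 0` and `t₀ < T`. There `D_x Φ = 0`,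
`D_x² Φ ≤ 0` and `D_t Φ ≤ 0`; thus `w` and `D_x w` are positive, the weight `e^{2Kt}` turns the
inequality into `w ≤ D_x w`, and `Φ(x₀, t₀) ≤ ε - ε (1 + x₀) < 0`. Letting `ε → 0` gives `w ≤ 0`.
-/

open Filter Topology Real

theorem HasDerivAt.nonpos_of_isMaxOn_Icc {f : ℝ → ℝ} {f' t T : ℝ} (hf : HasDerivAt f f' t)
    (htT : t < T) (hmax : IsMaxOn f (Icc t T) t) : f' ≤ 0 := by
  have hcone : T - t ∈ posTangentConeAt (Icc t T) t :=
    sub_mem_posTangentConeAt_of_segment_subset (segment_eq_Icc htT.le).subset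
  have h := hmax.localize.hasFDerivWithinAt_nonpos hf.hasFDerivAt.hasFDerivWithinAt hcone
  rw [ContinuousLinearMap.toSpanSingleton_apply, smul_eq_mul] at h
  exact nonpos_of_mul_nonpos_right h (sub_pos.2 htT)

theorem IsLocalMax.hasDerivAt_deriv_nonpos {f f' : ℝ → ℝ} {f'' x : ℝ} (hmax : IsLocalMax f x)
    (hf : ∀ᶠ y in 𝓝 x, HasDerivAt f (f' y) y) (hf' : HasDerivAt f' f'' x) : f'' ≤ 0 := by
  have hderiv : deriv f =ᶠ[𝓝 x] f' := hf.mono fun y hy => hy.deriv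
  by_contra! hpos
  -- otherwise the second derivative test makes `x` a local minimum too, so `f` is locally constant
  have hmin : IsLocalMin f x :=
    isLocalMin_of_deriv_deriv_pos (by rwa [hderiv.deriv_eq, hf'.deriv]) hmax.deriv_eq_zero
      hf.self_of_nhds.continuousAt
  have hconst : f =ᶠ[𝓝 x] fun _ => f x :=
    (hmax.and hmin).mono fun y hy => le_antisymm hy.1 hy.2
  have hderiv_zero : f' =ᶠ[𝓝 x] fun _ => 0 :=
    hderiv.symm.trans <| hconst.eventuallyEq_nhds.mono fun y hy => by
      rw [hy.deriv_eq, deriv_const]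
  have := hderiv_zero.deriv_eq
  rw [hf'.deriv, deriv_const] at this
  exact hpos.ne' this

structure IsParabolicSubsolution (T K : ℝ) (a w wx wxx wt : ℝ → ℝ → ℝ) : Prop where
  continuousOn : ContinuousOn (fun p : ℝ × ℝ => w p.1 p.2) (Ici 0 ×ˢ Icc 0 T)
  hasDerivAt_x : ∀ x ∈ Ioi (0:ℝ), ∀ t ∈ Ico (0:ℝ) T, HasDerivAt (w · t) (wx x t) x
  hasDerivAt_xx : ∀ x ∈ Ioi (0:ℝ), ∀ t ∈ Ico (0:ℝ) T, HasDerivAt (wx · t) (wxx x t) x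
  hasDerivAt_t : ∀ x ∈ Ioi (0:ℝ), ∀ t ∈ Ico (0:ℝ) T, HasDerivAt (w x ·) (wt x t) t
  coeff_nonneg : ∀ x ∈ Ioi (0:ℝ), ∀ t ∈ Ico (0:ℝ) T, 0 ≤ a x t
  subsolution : ∀ x ∈ Ioi (0:ℝ), ∀ t ∈ Ico (0:ℝ) T,
    0 ≤ wt x t + a x t * wxx x t + K * (|w x t| + |wx x t|)

noncomputable def penalized (K ε : ℝ) (w : ℝ → ℝ → ℝ) (x t : ℝ) : ℝ :=
  w x t * exp (2 * K * t) - ε * (1 + x)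

section Penalized

variable {T K ε M x t : ℝ} {w : ℝ → ℝ → ℝ}

theorem penalized_nonpos_of_nonpos (hε : 0 ≤ ε) (hx : 0 ≤ x) (hw : w x t ≤ 0) :
    penalized K ε w x t ≤ 0 := by
  unfold penalized
  nlinarith [exp_pos (2 * K * t)]

theorem penalized_nonpos_of_le (hK : 0 ≤ K) (hε : 0 < ε) (hx : 0 ≤ x) (ht : t ≤ T)
    (hwM : w x t ≤ M) (hMx : M * exp (2 * K * T) / ε ≤ x) : penalized K ε w x t ≤ 0 := by
  rcases le_or_gt (w x t) 0 with hw | hw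
  · exact penalized_nonpos_of_nonpos hε.le hx hw
  have hexp : exp (2 * K * t) ≤ exp (2 * K * T) := exp_le_exp.2 (by nlinarith)
  rw [div_le_iff₀ hε] at hMx
  unfold penalized
  nlinarith [exp_pos (2 * K * t)]

end Penalized

namespace IsParabolicSubsolution

variable {T K ε M : ℝ} {a w wx wxx wt : ℝ → ℝ → ℝ}

theorem penalized_nonpos_of_isLocalMax {x t : ℝ}
    (hw : IsParabolicSubsolution T K a w wx wxx wt) (hK : 0 < K) (hε : 0 < ε)
    (hx : 0 < x) (ht : t ∈ Ico 0 T) (hmax_x : IsLocalMax (penalized K ε w · t) x)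
    (hmax_t : IsMaxOn (penalized K ε w x ·) (Icc t T) t) : penalized K ε w x t ≤ 0 := by
  set E := exp (2 * K * t)
  have hE : 0 < E := exp_pos _
  have hΦx : ∀ᶠ y in 𝓝 x, HasDerivAt (penalized K ε w · t) (wx y t * E - ε) y := by
    filter_upwards [isOpen_Ioi.mem_nhds hx] with y hy
    have h := ((hw.hasDerivAt_x y hy t ht).mul_const E).sub
      (((hasDerivAt_id' y).const_add 1).const_mul ε)
    rwa [mul_one] at h
  have hslope : wx x t * E = ε := sub_eq_zero.1 (hmax_x.hasDerivAt_eq_zero hΦx.self_of_nhds)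
  have hconcave : wxx x t ≤ 0 := nonpos_of_mul_nonpos_left
    (hmax_x.hasDerivAt_deriv_nonpos hΦx
      ((hw.hasDerivAt_xx x hx t ht).mul_const E |>.sub_const ε)) hE
  have hΦt : HasDerivAt (penalized K ε w x ·) (wt x t * E + w x t * (E * (2 * K))) t := by
    have hexp : HasDerivAt (fun s => exp (2 * K * s)) (E * (2 * K)) t := by
      simpa using ((hasDerivAt_id t).const_mul (2 * K)).exp
    exact ((hw.hasDerivAt_t x hx t ht).mul hexp).sub_const _
  have hdecay : wt x t + 2 * K * w x t ≤ 0 := by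
    have := hΦt.nonpos_of_isMaxOn_Icc ht.2 hmax_t
    nlinarith
  unfold penalized
  by_contra! hpos
  have hw_pos : 0 < w x t := pos_of_mul_pos_left (by nlinarith) hE.le
  have hwx_pos : 0 < wx x t := pos_of_mul_pos_left (hslope ▸ hε) hE.le
  have hsub := hw.subsolution x hx t ht
  rw [abs_of_pos hw_pos, abs_of_pos hwx_pos] at hsub
  have hle : w x t ≤ wx x t := by
    nlinarith [mul_nonpos_of_nonneg_of_nonpos (hw.coeff_nonneg x hx t ht) hconcave]
  have hwE : w x t * E ≤ ε := hslope ▸ mul_le_mul_of_nonneg_right hle hE.le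
  linarith [mul_pos hε hx]

theorem penalized_nonpos (hw : IsParabolicSubsolution T K a w wx wxx wt) (hK : 0 < K)
    (hε : 0 < ε) (hM : ∀ x ∈ Ici (0:ℝ), ∀ t ∈ Icc (0:ℝ) T, w x t ≤ M)
    (hbdry : ∀ p ∈ parabBdry T, w p.1 p.2 ≤ 0) {x t : ℝ} (hx : 0 ≤ x) (ht : t ∈ Icc 0 T) :
    penalized K ε w x t ≤ 0 := by
  set R := max x (M * exp (2 * K * T) / ε)
  have hcont : ContinuousOn (fun p : ℝ × ℝ => penalized K ε w p.1 p.2) (Icc 0 R ×ˢ Icc 0 T) :=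
    ((hw.continuousOn.mono (prod_mono Icc_subset_Ici_self subset_rfl)).mul
      (by fun_prop)).sub (by fun_prop)
  obtain ⟨⟨x₀, t₀⟩, ⟨⟨hx₀, hx₀R⟩, ht₀⟩, hmax⟩ := (isCompact_Icc.prod isCompact_Icc).exists_isMaxOn
    ⟨(x, t), ⟨hx, le_max_left _ _⟩, ht⟩ hcont
  refine le_trans (hmax ⟨⟨hx, le_max_left _ _⟩, ht⟩) ?_
  rcases hx₀.eq_or_lt with rfl | hx₀_pos
  · exact penalized_nonpos_of_nonpos hε.le le_rfl (hbdry (0, t₀) (Or.inr ⟨rfl, ht₀⟩))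
  rcases ht₀.2.eq_or_lt with rfl | ht₀T
  · exact penalized_nonpos_of_nonpos hε.le hx₀ (hbdry (x₀, t₀) (Or.inl ⟨hx₀, rfl⟩))
  rcases hx₀R.eq_or_lt with hx₀_eq | hx₀R
  · exact penalized_nonpos_of_le hK.le hε hx₀ ht₀.2 (hM _ hx₀ _ ht₀)
      (hx₀_eq ▸ le_max_right _ _)
  refine hw.penalized_nonpos_of_isLocalMax hK hε hx₀_pos ⟨ht₀.1, ht₀T⟩ ?_ ?_
  · filter_upwards [Ioo_mem_nhds hx₀_pos hx₀R] with y hy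
    exact isMaxOn_iff.1 hmax (y, t₀) ⟨⟨hy.1.le, hy.2.le⟩, ht₀⟩
  · exact fun s hs => isMaxOn_iff.1 hmax (x₀, s) ⟨⟨hx₀, hx₀R.le⟩, ht₀.1.trans hs.1, hs.2⟩

theorem nonpos (hw : IsParabolicSubsolution T K a w wx wxx wt) (hK : 0 < K)
    (hM : ∀ x ∈ Ici (0:ℝ), ∀ t ∈ Icc (0:ℝ) T, w x t ≤ M)
    (hbdry : ∀ p ∈ parabBdry T, w p.1 p.2 ≤ 0) :
    ∀ x ∈ Ici (0:ℝ), ∀ t ∈ Icc (0:ℝ) T, w x t ≤ 0 := by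
  intro x hx t ht
  have hx₁ : 0 < 1 + x := by linarith [mem_Ici.1 hx]
  have hweighted : w x t * exp (2 * K * t) ≤ 0 := le_of_forall_pos_le_add fun δ hδ => by
    have := hw.penalized_nonpos hK (div_pos hδ hx₁) hM hbdry hx ht
    rw [penalized, div_mul_cancel₀ _ hx₁.ne'] at this
    linarith
  exact nonpos_of_mul_nonpos_left hweighted (exp_pos _)

end IsParabolicSubsolution

theorem le_of_le_on_parabBdry {T K M : ℝ} {σ u v : ℝ → ℝ → ℝ} {H : ℝ → ℝ → ℝ → ℝ → ℝ}
    (hK : 0 < K) (hH : ∀ p p' u u' x : ℝ, ∀ t ∈ Icc (0:ℝ) T,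
      |H p u x t - H p' u' x t| ≤ K * (|u - u'| + |p - p'|))
    (hu : RegC21 T u) (hv : RegC21 T v)
    (hpde_u : ∀ x ∈ Ioi (0:ℝ), ∀ t ∈ Ico (0:ℝ) T,
      Dt u x t + σ x t ^ 2 / 2 * Dxx u x t + H (Dx u x t) (u x t) x t = 0)
    (hpde_v : ∀ x ∈ Ioi (0:ℝ), ∀ t ∈ Ico (0:ℝ) T,
      Dt v x t + σ x t ^ 2 / 2 * Dxx v x t + H (Dx v x t) (v x t) x t = 0)
    (hM : ∀ x ∈ Ici (0:ℝ), ∀ t ∈ Icc (0:ℝ) T, u x t - v x t ≤ M)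
    (hbdry : ∀ p ∈ parabBdry T, u p.1 p.2 ≤ v p.1 p.2) :
    ∀ x ∈ Ici (0:ℝ), ∀ t ∈ Icc (0:ℝ) T, u x t ≤ v x t := by
  have hw : IsParabolicSubsolution T K (fun x t => σ x t ^ 2 / 2) (fun x t => u x t - v x t)
      (fun x t => Dx u x t - Dx v x t) (fun x t => Dxx u x t - Dxx v x t)
      (fun x t => Dt u x t - Dt v x t) :=
    { continuousOn := hu.1.sub hv.1
      hasDerivAt_x := fun x hx t ht =>
        (hu.2.1 x hx t ht).1.hasDerivAt.sub (hv.2.1 x hx t ht).1.hasDerivAt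
      hasDerivAt_xx := fun x hx t ht =>
        (hu.2.1 x hx t ht).2.1.hasDerivAt.sub (hv.2.1 x hx t ht).2.1.hasDerivAt
      hasDerivAt_t := fun x hx t ht =>
        (hu.2.1 x hx t ht).2.2.hasDerivAt.sub (hv.2.1 x hx t ht).2.2.hasDerivAt
      coeff_nonneg := fun x _ t _ => by positivity
      subsolution := fun x hx t ht => by
        have hlip := hH (Dx u x t) (Dx v x t) (u x t) (v x t) x t (Ico_subset_Icc_self ht)
        linarith [hpde_u x hx t ht, hpde_v x hx t ht, le_abs_self
          (H (Dx u x t) (u x t) x t - H (Dx v x t) (v x t) x t)] }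
  intro x hx t ht
  exact sub_nonpos.1 (hw.nonpos hK hM (fun p hp => sub_nonpos.2 (hbdry p hp)) x hx t ht)

theorem MemCb10.exists_sub_le {T : ℝ} {u v : ℝ → ℝ → ℝ} (hu : MemCb10 T u) (hv : MemCb10 T v)
    (hT : ∀ x ∈ Ici (0:ℝ), u x T = v x T) :
    ∃ M, ∀ x ∈ Ici (0:ℝ), ∀ t ∈ Icc (0:ℝ) T, u x t - v x t ≤ M := by
  obtain ⟨Cu, hCu⟩ := hu.2.1
  obtain ⟨Cv, hCv⟩ := hv.2.1
  refine ⟨max (Cu + Cv) 0, fun x hx t ht => ?_⟩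
  rcases ht.2.eq_or_lt with rfl | htT
  · rw [hT x hx, sub_self]
    exact le_max_right _ _
  · have hu_le := (abs_le.1 (hCu x hx t ⟨ht.1, htT⟩)).2
    have hv_ge := (abs_le.1 (hCv x hx t ⟨ht.1, htT⟩)).1
    exact le_max_of_le_left (by linarith)

theorem semilinear_exit_time_uniqueness_general
    (T : ℝ) (σ β : ℝ → ℝ → ℝ) (H : ℝ → ℝ → ℝ → ℝ → ℝ)
    (hA3 : CondA3 T H)
    (u₁ u₂ : ℝ → ℝ → ℝ)
    (hreg₁ : RegC21 T u₁) (hreg₂ : RegC21 T u₂)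
    (hpde₁ : ∀ x ∈ Ioi (0:ℝ), ∀ t ∈ Ico (0:ℝ) T,
      Dt u₁ x t + σ x t ^ 2 / 2 * Dxx u₁ x t + H (Dx u₁ x t) (u₁ x t) x t = 0)
    (hpde₂ : ∀ x ∈ Ioi (0:ℝ), ∀ t ∈ Ico (0:ℝ) T,
      Dt u₂ x t + σ x t ^ 2 / 2 * Dxx u₂ x t + H (Dx u₂ x t) (u₂ x t) x t = 0)
    (hbd₁ : ∀ p ∈ parabBdry T, u₁ p.1 p.2 = β p.1 p.2)
    (hbd₂ : ∀ p ∈ parabBdry T, u₂ p.1 p.2 = β p.1 p.2)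
    (hcls₁ : MemC1plus T u₁) (hcls₂ : MemC1plus T u₂) :
    ∀ x ∈ Ici (0:ℝ), ∀ t ∈ Icc (0:ℝ) T, u₁ x t = u₂ x t := by
  obtain ⟨K, hK, -, hHK⟩ := hA3.2
  have hbd : ∀ p ∈ parabBdry T, u₁ p.1 p.2 = u₂ p.1 p.2 :=
    fun p hp => (hbd₁ p hp).trans (hbd₂ p hp).symm
  have hT : ∀ x ∈ Ici (0:ℝ), u₁ x T = u₂ x T := fun x hx => hbd (x, T) (Or.inl ⟨hx, rfl⟩)
  obtain ⟨M₁₂, hM₁₂⟩ := hcls₁.1.exists_sub_le hcls₂.1 hT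
  obtain ⟨M₂₁, hM₂₁⟩ := hcls₂.1.exists_sub_le hcls₁.1 fun x hx => (hT x hx).symm
  intro x hx t ht
  exact le_antisymm
    (le_of_le_on_parabBdry hK hHK hreg₁ hreg₂ hpde₁ hpde₂ hM₁₂ (fun p hp => (hbd p hp).le)
      x hx t ht)
    (le_of_le_on_parabBdry hK hHK hreg₂ hreg₁ hpde₂ hpde₁ hM₂₁ (fun p hp => (hbd p hp).ge)
      x hx t ht)

/-- Under (A1)–(A3) and (A4'), classical solutions of the semilinear Cauchy–Dirichlet
problem belonging to the class `C^{1+,0+}_{b,loc}` are unique. -/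
theorem semilinear_exit_time_uniqueness
    (T : ℝ) (hT : 0 < T) (σ β : ℝ → ℝ → ℝ) (H : ℝ → ℝ → ℝ → ℝ → ℝ)
    (hA1 : CondA1 T σ) (hA2 : CondA2 T β) (hA3 : CondA3 T H) (hA4 : CondA4' T σ)
    (u₁ u₂ : ℝ → ℝ → ℝ)
    (hreg₁ : RegC21 T u₁) (hreg₂ : RegC21 T u₂)
    (hpde₁ : ∀ x ∈ Ioi (0:ℝ), ∀ t ∈ Ico (0:ℝ) T,
      Dt u₁ x t + σ x t ^ 2 / 2 * Dxx u₁ x t + H (Dx u₁ x t) (u₁ x t) x t = 0)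
    (hpde₂ : ∀ x ∈ Ioi (0:ℝ), ∀ t ∈ Ico (0:ℝ) T,
      Dt u₂ x t + σ x t ^ 2 / 2 * Dxx u₂ x t + H (Dx u₂ x t) (u₂ x t) x t = 0)
    (hbd₁ : ∀ p ∈ parabBdry T, u₁ p.1 p.2 = β p.1 p.2)
    (hbd₂ : ∀ p ∈ parabBdry T, u₂ p.1 p.2 = β p.1 p.2)
    (hcls₁ : MemC1plus T u₁) (hcls₂ : MemC1plus T u₂) :
    ∀ x ∈ Ici (0:ℝ), ∀ t ∈ Icc (0:ℝ) T, u₁ x t = u₂ x t :=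
  semilinear_exit_time_uniqueness_general T σ β H hA3 u₁ u₂ hreg₁ hreg₂ hpde₁ hpde₂ hbd₁ hbd₂ hcls₁
    hcls₂
end

section
/- Fix real numbers 0 ≤ t < T. For r>0 let μ_r denote the Gaussian measure on ℝ with mean 0 and variance r, and define F : [0,+∞) → ℝ by F(x) := ∫_t^T μ_{s−t}([−x,x]) ds. Then for all 0 ≤ x̄ ≤ x one has 0 ≤ F(x) − F(x̄) ≤ 2·√(2(T−t)/π)·(x−x̄); in particular F is Lipschitz continuous on [0,+∞) with constant 2√(2(T−t)/π). -/
open Set MeasureTheory ProbabilityTheory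
open scoped NNReal ENNReal

/-- `F(x) = ∫_t^T μ_{s-t}([-x,x]) ds`, where `μ_r = N(0,r)` is the real Gaussian
measure with mean `0` and variance `r`. -/
noncomputable def gaussF (t T x : ℝ) : ℝ :=
  ∫ s in t..T, ((gaussianReal 0 (Real.toNNReal (s - t))) (Icc (-x) x)).toReal

namespace GaussAux

open Real

lemma pdf_le (v : ℝ≥0) (z : ℝ) :
    gaussianPDFReal 0 v z ≤ (Real.sqrt (2 * π * v))⁻¹ := by
  rw [gaussianPDFReal]
  refine mul_le_of_le_one_right (inv_nonneg.mpr (Real.sqrt_nonneg _)) (Real.exp_le_one_iff.mpr ?_)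
  apply div_nonpos_of_nonpos_of_nonneg
  · simpa using sq_nonneg (z - 0)
  · positivity

lemma toReal_Icc {v : ℝ≥0} (hv : v ≠ 0) {a b : ℝ} (hab : a ≤ b) :
    ((gaussianReal 0 v) (Icc a b)).toReal = ∫ z in a..b, gaussianPDFReal 0 v z := by
  rw [gaussianReal_apply_eq_integral 0 hv,
    ENNReal.toReal_ofReal
      (setIntegral_nonneg measurableSet_Icc fun z _ => gaussianPDFReal_nonneg 0 v z),
    intervalIntegral.integral_of_le hab, ← integral_Icc_eq_integral_Ioc]

lemma diff_le {v : ℝ≥0} (hv : v ≠ 0) {a b : ℝ} (ha : 0 ≤ a) (hab : a ≤ b) :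
    ((gaussianReal 0 v) (Icc (-b) b)).toReal - ((gaussianReal 0 v) (Icc (-a) a)).toReal
      ≤ 2 * (b - a) * (Real.sqrt (2 * π * v))⁻¹ := by
  have hint : ∀ c d : ℝ, IntervalIntegrable (gaussianPDFReal 0 v) volume c d :=
    fun c d => (integrable_gaussianPDFReal 0 v).intervalIntegrable
  have h1 : (∫ z in (-b)..(-a), gaussianPDFReal 0 v z)
      + ∫ z in (-a)..b, gaussianPDFReal 0 v z
      = ∫ z in (-b)..b, gaussianPDFReal 0 v z :=
    intervalIntegral.integral_add_adjacent_intervals (hint _ _) (hint _ _)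
  have h2 : (∫ z in (-a)..a, gaussianPDFReal 0 v z)
      + ∫ z in a..b, gaussianPDFReal 0 v z
      = ∫ z in (-a)..b, gaussianPDFReal 0 v z :=
    intervalIntegral.integral_add_adjacent_intervals (hint _ _) (hint _ _)
  have key : ∀ c d : ℝ, c ≤ d → (∫ z in c..d, gaussianPDFReal 0 v z)
      ≤ (d - c) * (Real.sqrt (2 * π * v))⁻¹ := by
    intro c d hcd
    calc (∫ z in c..d, gaussianPDFReal 0 v z)
        ≤ ∫ _ in c..d, (Real.sqrt (2 * π * v))⁻¹ :=
          intervalIntegral.integral_mono_on hcd (hint _ _) intervalIntegrable_const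
            (fun z _ => pdf_le v z)
      _ = (d - c) * (Real.sqrt (2 * π * v))⁻¹ := by
          simp [intervalIntegral.integral_const, smul_eq_mul]
          ring
  rw [toReal_Icc hv (by linarith), toReal_Icc hv (by linarith)]
  have hb1 := key (-b) (-a) (by linarith)
  have hb2 := key a b hab
  linarith

lemma measurable (t x : ℝ) :
    Measurable (fun s => ((gaussianReal 0 (Real.toNNReal (s - t))) (Icc (-x) x)).toReal) := by
  classical
  have hm : Measurable (fun p : ℝ × ℝ => gaussianPDF 0 (Real.toNNReal (p.1 - t)) p.2) := by
    simp only [gaussianPDF, gaussianPDFReal]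
    apply Measurable.ennreal_ofReal
    have hv : Continuous fun p : ℝ × ℝ => ((Real.toNNReal (p.1 - t)) : ℝ) :=
      NNReal.continuous_coe.comp
        (continuous_real_toNNReal.comp (continuous_fst.sub continuous_const))
    apply Measurable.mul
    · exact ((Real.continuous_sqrt.comp
        ((continuous_const.mul continuous_const).mul hv)).measurable).inv
    · exact (Measurable.div
        (((continuous_snd.sub continuous_const).pow 2).neg.measurable)
        ((continuous_const.mul hv).measurable)).exp
  have hg : Measurable fun s : ℝ =>
      (∫⁻ z in Icc (-x) x, gaussianPDF 0 (Real.toNNReal (s - t)) z).toReal :=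
    (Measurable.lintegral_prod_right' (ν := volume.restrict (Icc (-x) x)) hm).ennreal_toReal
  have heq : (fun s => ((gaussianReal 0 (Real.toNNReal (s - t))) (Icc (-x) x)).toReal)
      = (Iic t).piecewise (fun _ => ((Measure.dirac (0 : ℝ)) (Icc (-x) x)).toReal)
          (fun s => (∫⁻ z in Icc (-x) x, gaussianPDF 0 (Real.toNNReal (s - t)) z).toReal) := by
    funext s
    by_cases hs : s ≤ t
    · rw [Set.piecewise_eq_of_mem _ _ _ (mem_Iic.mpr hs), Real.toNNReal_of_nonpos (by linarith),
        gaussianReal_zero_var]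
    · rw [Set.piecewise_eq_of_notMem _ _ _ (by simpa using hs)]
      have hv : Real.toNNReal (s - t) ≠ 0 := by
        rw [ne_eq, Real.toNNReal_eq_zero, not_le]
        push_neg at hs
        linarith
      rw [gaussianReal_apply 0 hv]
  rw [heq]
  exact Measurable.piecewise measurableSet_Iic measurable_const hg

lemma le_one (v : ℝ≥0) (A : Set ℝ) : ((gaussianReal 0 v) A).toReal ≤ 1 := by
  have h := prob_le_one (μ := gaussianReal 0 v) (s := A)
  calc ((gaussianReal 0 v) A).toReal ≤ (1 : ℝ≥0∞).toReal :=
        ENNReal.toReal_mono ENNReal.one_ne_top h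
    _ = 1 := by simp

lemma intInt (t T x : ℝ) (htT : t ≤ T) :
    IntervalIntegrable
      (fun s => ((gaussianReal 0 (Real.toNNReal (s - t))) (Icc (-x) x)).toReal)
      volume t T := by
  rw [intervalIntegrable_iff_integrableOn_Ioc_of_le htT]
  apply Measure.integrableOn_of_bounded (M := 1) measure_Ioc_lt_top.ne
    (measurable t x).aestronglyMeasurable
  refine ae_of_all _ fun s => ?_
  rw [Real.norm_eq_abs, abs_of_nonneg ENNReal.toReal_nonneg]
  exact le_one _ _

end GaussAux

/-- For `0 ≤ t < T`, the function `x ↦ ∫_t^T N(0,s-t)([-x,x]) ds` is nondecreasing and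
Lipschitz continuous on `[0,∞)` with constant `2√(2(T-t)/π)`. -/
theorem gaussian_occupation_lipschitz
    (t T : ℝ) (ht : 0 ≤ t) (htT : t < T) :
    ∀ xbar x : ℝ, 0 ≤ xbar → xbar ≤ x →
      0 ≤ gaussF t T x - gaussF t T xbar ∧
      gaussF t T x - gaussF t T xbar ≤
        2 * Real.sqrt (2 * (T - t) / Real.pi) * (x - xbar) := by
  intro xbar x hxbar hxx
  have hx : 0 ≤ x := hxbar.trans hxx
  set m : ℝ → ℝ → ℝ :=
    fun y s => ((gaussianReal 0 (Real.toNNReal (s - t))) (Icc (-y) y)).toReal with hm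
  have hintx : IntervalIntegrable (m x) volume t T := GaussAux.intInt t T x htT.le
  have hintxbar : IntervalIntegrable (m xbar) volume t T := GaussAux.intInt t T xbar htT.le
  have hmono : ∀ s, m xbar s ≤ m x s := fun s =>
    ENNReal.toReal_mono (measure_ne_top _ _)
      (measure_mono (Icc_subset_Icc (neg_le_neg hxx) hxx))
  constructor
  · have h1 : gaussF t T xbar ≤ gaussF t T x :=
      intervalIntegral.integral_mono_on htT.le hintxbar hintx fun s _ => hmono s
    linarith
  · set c : ℝ := 2 * (x - xbar) * (Real.sqrt (2 * Real.pi))⁻¹ with hc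
    have hrpow : IntervalIntegrable (fun s => (s - t) ^ (-(1 / 2) : ℝ)) volume t T := by
      have h := (intervalIntegral.intervalIntegrable_rpow' (a := 0) (b := T - t)
        (r := -(1 / 2)) (by norm_num)).comp_sub_right t
      simpa using h
    have hBint : IntervalIntegrable (fun s => c * (s - t) ^ (-(1 / 2) : ℝ)) volume t T :=
      hrpow.const_mul c
    have hpt : ∀ s ∈ Icc t T, m x s - m xbar s ≤ c * (s - t) ^ (-(1 / 2) : ℝ) := by
      intro s hs
      rcases eq_or_lt_of_le hs.1 with hst | hst
      · have hzero : Real.toNNReal (s - t) = 0 := by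
          rw [← hst]; simp
        have h0x : (0 : ℝ) ∈ Icc (-x) x := ⟨by linarith, hx⟩
        have h0xbar : (0 : ℝ) ∈ Icc (-xbar) xbar := ⟨by linarith, hxbar⟩
        have e1 : m x s = 1 := by
          rw [hm]; simp only
          rw [hzero, gaussianReal_zero_var, Measure.dirac_apply_of_mem h0x]; simp
        have e2 : m xbar s = 1 := by
          rw [hm]; simp only
          rw [hzero, gaussianReal_zero_var, Measure.dirac_apply_of_mem h0xbar]; simp
        have hst0 : (s - t : ℝ) = 0 := by rw [← hst]; ring
        rw [e1, e2, hst0, Real.zero_rpow (by norm_num : (-(1 / 2) : ℝ) ≠ 0), mul_zero]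
        norm_num
      · have hpos : (0 : ℝ) < s - t := by linarith
        have hvne : Real.toNNReal (s - t) ≠ 0 := by
          rw [ne_eq, Real.toNNReal_eq_zero, not_le]; exact hpos
        have hcoe : ((Real.toNNReal (s - t)) : ℝ) = s - t := Real.coe_toNNReal _ hpos.le
        have hdiff := GaussAux.diff_le hvne hxbar hxx
        rw [hcoe] at hdiff
        refine hdiff.trans_eq ?_
        rw [hc]
        rw [show 2 * Real.pi * (s - t) = (2 * Real.pi) * (s - t) by ring,
          Real.sqrt_mul (by positivity), mul_inv,
          Real.sqrt_eq_rpow (s - t), ← Real.rpow_neg hpos.le]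
        ring
    have hle : gaussF t T x - gaussF t T xbar
        ≤ ∫ s in t..T, c * (s - t) ^ (-(1 / 2) : ℝ) := by
      rw [gaussF, gaussF, ← intervalIntegral.integral_sub hintx hintxbar]
      exact intervalIntegral.integral_mono_on htT.le (hintx.sub hintxbar) hBint hpt
    have hval : (∫ s in t..T, c * (s - t) ^ (-(1 / 2) : ℝ))
        = c * (2 * Real.sqrt (T - t)) := by
      rw [intervalIntegral.integral_const_mul]
      congr 1
      have hcomp : (∫ s in t..T, (s - t) ^ (-(1 / 2) : ℝ))
          = ∫ u in (0 : ℝ)..(T - t), u ^ (-(1 / 2) : ℝ) := by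
        have := intervalIntegral.integral_comp_sub_right
          (a := t) (b := T) (fun u => u ^ (-(1 / 2) : ℝ)) t
        simpa using this
      rw [hcomp, integral_rpow (Or.inl (by norm_num))]
      rw [Real.zero_rpow (by norm_num)]
      rw [show (-(1 / 2) : ℝ) + 1 = 1 / 2 by norm_num, Real.sqrt_eq_rpow]
      ring
    have hTt : (0 : ℝ) ≤ T - t := by linarith
    have h2π : (0 : ℝ) < Real.sqrt (2 * Real.pi) :=
      Real.sqrt_pos.mpr (by positivity)
    have key : Real.sqrt (2 * (T - t) / Real.pi) * Real.sqrt (2 * Real.pi)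
        = 2 * Real.sqrt (T - t) := by
      rw [← Real.sqrt_mul (by positivity)]
      rw [show 2 * (T - t) / Real.pi * (2 * Real.pi) = 2 ^ 2 * (T - t) by
        field_simp]
      rw [Real.sqrt_mul (by positivity), Real.sqrt_sq (by norm_num)]
    have key' : Real.sqrt (2 * (T - t) / Real.pi)
        = 2 * Real.sqrt (T - t) * (Real.sqrt (2 * Real.pi))⁻¹ := by
      rw [eq_mul_inv_iff_mul_eq₀ h2π.ne']
      exact key
    have hfinal : c * (2 * Real.sqrt (T - t))
        = 2 * Real.sqrt (2 * (T - t) / Real.pi) * (x - xbar) := by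
      rw [hc, key']
      ring
    linarith [hle, hval.le, hval.ge, hfinal.le, hfinal.ge]
end
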